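/- arXiv:1110.0037 — 8 statements merged into one kernel-verified Lean document; each statement's English description precedes it below -/
import Mathlib

section
/- Let u, v, x, y be four distinct points in ℝ², each pair among {u,v} and {x,y} at distance at most 1. If the segments conv(u,v) and conv(x,y) intersect, then among the four points there exist three that pairwise have distance at most 1 (i.e., the unit disk graph on {u,v,x,y} contains a triangle). -/
lemma key_cross (u v x y p : EuclideanSpace ℝ (Fin 2))
    (h1 : dist u p + dist p v ≤ 1) (h2 : dist x p + dist p y ≤ 1)
    (ha : dist u p ≤ dist v p) (hc : dist x p ≤ dist y p) :
    dist u x ≤ 1 ∧ (dist u y ≤ 1 ∨ dist v x ≤ 1) := by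
  have hpv : dist p v = dist v p := dist_comm p v
  have hpy : dist p y = dist y p := dist_comm p y
  have t1 : dist u x ≤ dist u p + dist p x := dist_triangle u p x
  have t2 : dist u y ≤ dist u p + dist p y := dist_triangle u p y
  have t3 : dist v x ≤ dist v p + dist p x := dist_triangle v p x
  have hpx : dist p x = dist x p := dist_comm p x
  constructor
  · linarith
  · rcases le_or_gt (dist u y) 1 with h | h
    · exact Or.inl h
    · right; linarith

/-- Crossing lemma: if `uv` and `xy` are crossing edges of a unit disk graph on four
distinct points, then three of the four points pairwise have distance at most 1. -/
theorem stmt_5 (u v x y : EuclideanSpace ℝ (Fin 2))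
    (huv : u ≠ v) (hux : u ≠ x) (huy : u ≠ y) (hvx : v ≠ x) (hvy : v ≠ y) (hxy : x ≠ y)
    (he1 : dist u v ≤ 1) (he2 : dist x y ≤ 1)
    (hcross : (segment ℝ u v ∩ segment ℝ x y).Nonempty) :
    ∃ a b c : EuclideanSpace ℝ (Fin 2),
      a ∈ ({u, v, x, y} : Set (EuclideanSpace ℝ (Fin 2))) ∧
      b ∈ ({u, v, x, y} : Set (EuclideanSpace ℝ (Fin 2))) ∧
      c ∈ ({u, v, x, y} : Set (EuclideanSpace ℝ (Fin 2))) ∧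
      a ≠ b ∧ a ≠ c ∧ b ≠ c ∧
      dist a b ≤ 1 ∧ dist a c ≤ 1 ∧ dist b c ≤ 1 := by
  obtain ⟨p, hp1, hp2⟩ := hcross
  have e1 : dist u p + dist p v = dist u v := dist_add_dist_of_mem_segment hp1
  have e2 : dist x p + dist p y = dist x y := dist_add_dist_of_mem_segment hp2
  have h1 : dist u p + dist p v ≤ 1 := by linarith
  have h2 : dist x p + dist p y ≤ 1 := by linarith
  have h1' : dist v p + dist p u ≤ 1 := by
    rw [dist_comm v p, dist_comm p u]; linarith
  have h2' : dist y p + dist p x ≤ 1 := by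
    rw [dist_comm y p, dist_comm p x]; linarith
  rcases le_total (dist u p) (dist v p) with ha | ha <;>
    rcases le_total (dist x p) (dist y p) with hc | hc
  · obtain ⟨d1, d2 | d2⟩ := key_cross u v x y p h1 h2 ha hc
    · exact ⟨u, x, y, by simp, by simp, by simp, hux, huy, hxy, d1, d2, he2⟩
    · exact ⟨u, v, x, by simp, by simp, by simp, huv, hux, hvx, he1, d1, d2⟩
  · obtain ⟨d1, d2 | d2⟩ := key_cross u v y x p h1 h2' ha hc
    · exact ⟨u, x, y, by simp, by simp, by simp, hux, huy, hxy, d2, d1, he2⟩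
    · exact ⟨u, v, y, by simp, by simp, by simp, huv, huy, hvy, he1, d1, d2⟩
  · obtain ⟨d1, d2 | d2⟩ := key_cross v u x y p h1' h2 ha hc
    · exact ⟨v, x, y, by simp, by simp, by simp, hvx, hvy, hxy, d1, d2, he2⟩
    · exact ⟨u, v, x, by simp, by simp, by simp, huv, hux, hvx, he1, d2, d1⟩
  · obtain ⟨d1, d2 | d2⟩ := key_cross v u y x p h1' h2' ha hc
    · exact ⟨v, x, y, by simp, by simp, by simp, hvx, hvy, hxy, d2, d1, he2⟩
    · exact ⟨u, v, y, by simp, by simp, by simp, huv, huy, hvy, he1, d2, d1⟩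
end

section
/- Let V be a finite nonempty set of points in ℝ². Then either there exist two points of V at distance greater than √3, or there is a closed disk of radius 1 containing all of V. -/
/-!
By Helly's theorem in the plane it suffices to find a unit disk containing any three points
`u, v, w` at mutual distances at most `√3`. If the triangle `uvw` is not acute, the disk with
the longest side as diameter contains it, and that side has length at most `√3 < 2`.
If it is acute, the circumcircle does: with squared side lengths `a, b, c ≤ 3`, the squared
circumradius is `a b c / (2(ab + bc + ca) - a² - b² - c²)`, which is at most `1`: the largest
angle `γ` lies in `[π/3, π/2)` and the opposite side `ℓ` is at most `√3`, so
`R = ℓ / (2 sin γ) ≤ 1`.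
-/

open Metric Finset Module

theorem Finset.Nonempty.exists_subset_triple {α : Type*} [DecidableEq α] {s : Finset α}
    (hs : s.Nonempty) (h : #s ≤ 3) : ∃ a ∈ s, ∃ b ∈ s, ∃ c ∈ s, s ⊆ {a, b, c} := by
  obtain h1 | h2 | h3 : #s = 1 ∨ #s = 2 ∨ #s = 3 := by have := hs.card_pos; omega
  · obtain ⟨a, rfl⟩ := card_eq_one.1 h1
    exact ⟨a, by simp, a, by simp, a, by simp, by simp⟩
  · obtain ⟨a, b, -, rfl⟩ := card_eq_two.1 h2
    exact ⟨a, by simp, b, by simp, b, by simp, by simp⟩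
  · obtain ⟨a, b, c, -, -, -, rfl⟩ := card_eq_three.1 h3
    exact ⟨a, by simp, b, by simp, c, by simp, subset_rfl⟩

/-- Sixteen times the squared area of a triangle with squared side lengths `a, b, c`. -/
def heron (a b c : ℝ) : ℝ := 2 * (a * b + b * c + c * a) - a ^ 2 - b ^ 2 - c ^ 2

theorem heron_pos {a b c : ℝ} (hab : a < b + c) (hba : b < a + c) (hca : c < a + b) :
    0 < heron a b c := by
  unfold heron
  nlinarith [mul_pos (sub_pos.2 hab) (sub_pos.2 hba), mul_pos (sub_pos.2 hba) (sub_pos.2 hca),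
    mul_pos (sub_pos.2 hca) (sub_pos.2 hab)]

theorem mul_mul_le_heron {a b c : ℝ} (ha : a ≤ 3) (hb : b ≤ 3) (hc : c ≤ 3)
    (hab : a ≤ b + c) (hba : b ≤ a + c) (hca : c ≤ a + b) : a * b * c ≤ heron a b c := by
  unfold heron
  nlinarith [mul_nonneg (sub_nonneg.2 hab) (sq_nonneg (c - b)),
    mul_nonneg (sub_nonneg.2 hba) (sq_nonneg (c - a)),
    mul_nonneg (sub_nonneg.2 hca) (sq_nonneg (b - a)),
    mul_nonneg (mul_nonneg (sub_nonneg.2 hab) (sub_nonneg.2 hba)) (sub_nonneg.2 hc),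
    mul_nonneg (mul_nonneg (sub_nonneg.2 hba) (sub_nonneg.2 hca)) (sub_nonneg.2 ha),
    mul_nonneg (mul_nonneg (sub_nonneg.2 hab) (sub_nonneg.2 hca)) (sub_nonneg.2 hb)]

section InnerProductSpace

variable {E : Type*} [NormedAddCommGroup E] [InnerProductSpace ℝ E]

theorem dist_midpoint_le_half_dist_of_sq_add_sq_le {u v w : E}
    (h : dist u v ^ 2 + dist u w ^ 2 ≤ dist v w ^ 2) :
    dist u (midpoint ℝ v w) ≤ dist v w / 2 := by
  have := EuclideanGeometry.dist_sq_add_dist_sq_eq_two_mul_dist_midpoint_sq_add_half_dist_sq u v w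
  exact (pow_le_pow_iff_left₀ dist_nonneg (by positivity) two_ne_zero).1 (by linarith)

theorem exists_circumcenter {u v w : E} {a b c : ℝ} (ha : dist v w ^ 2 = a)
    (hb : dist u w ^ 2 = b) (hc : dist u v ^ 2 = c) (hS : heron a b c ≠ 0) :
    ∃ x, dist x u ^ 2 = a * b * c / heron a b c ∧ dist x v ^ 2 = a * b * c / heron a b c ∧
      dist x w ^ 2 = a * b * c / heron a b c := by
  set p : Fin 3 → E := ![u, v, w]
  -- barycentric coordinates of the circumcenter
  set wt : Fin 3 → ℝ :=
    ![a * (b + c - a) / heron a b c, b * (a + c - b) / heron a b c, c * (a + b - c) / heron a b c]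
  have hwt : ∑ i, wt i = 1 := by
    simp only [Fin.sum_univ_three, wt, Matrix.cons_val]
    field_simp
    unfold heron
    ring
  have ha' : dist w v ^ 2 = a := by rwa [dist_comm]
  have hb' : dist w u ^ 2 = b := by rwa [dist_comm]
  have hc' : dist v u ^ 2 = c := by rwa [dist_comm]
  suffices ∀ i, dist (univ.affineCombination ℝ p wt) (p i) ^ 2 = a * b * c / heron a b c from
    ⟨_, this 0, this 1, this 2⟩
  intro i
  rw [sq, ← univ.affineCombination_of_eq_one_of_eq_zero (Pi.single i (1 : ℝ)) p (mem_univ i)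
    (by simp) (fun j _ hj => by simp [hj]), EuclideanGeometry.dist_affineCombination p hwt (by simp)]
  simp only [← sq]
  fin_cases i <;>
    simp only [Fin.sum_univ_three, Pi.sub_apply, Pi.single_apply, p, wt, Matrix.cons_val,
      dist_self, ha, hb, hc, ha', hb', hc', Fin.zero_eta, Fin.mk_one, Fin.reduceFinMk,
      Fin.isValue, Fin.reduceEq, ↓reduceIte] <;>
    field_simp <;> unfold heron <;> ring

theorem exists_dist_le_one_of_sq_add_sq_le {u v w : E} (hvw : dist v w ≤ √3)
    (h : dist u v ^ 2 + dist u w ^ 2 ≤ dist v w ^ 2) :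
    ∃ x, dist x u ≤ 1 ∧ dist x v ≤ 1 ∧ dist x w ≤ 1 := by
  have hsqrt : √3 ≤ 2 := Real.sqrt_le_iff.2 ⟨by norm_num, by norm_num⟩
  have hvw' : dist v w / 2 ≤ 1 := by linarith
  refine ⟨midpoint ℝ v w, ?_, ?_, ?_⟩
  · rw [dist_comm]
    exact (dist_midpoint_le_half_dist_of_sq_add_sq_le h).trans hvw'
  · rwa [dist_midpoint_left, Real.norm_two, ← div_eq_inv_mul]
  · rwa [dist_midpoint_right, Real.norm_two, ← div_eq_inv_mul]

theorem exists_dist_le_one_of_dist_le_sqrt_three {u v w : E} (huv : dist u v ≤ √3)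
    (huw : dist u w ≤ √3) (hvw : dist v w ≤ √3) :
    ∃ x, dist x u ≤ 1 ∧ dist x v ≤ 1 ∧ dist x w ≤ 1 := by
  by_cases hu : dist u v ^ 2 + dist u w ^ 2 ≤ dist v w ^ 2
  · exact exists_dist_le_one_of_sq_add_sq_le hvw hu
  by_cases hv : dist u v ^ 2 + dist v w ^ 2 ≤ dist u w ^ 2
  · obtain ⟨x, hxv, hxu, hxw⟩ :=
      exists_dist_le_one_of_sq_add_sq_le (u := v) huw (by rwa [dist_comm v u])
    exact ⟨x, hxu, hxv, hxw⟩
  by_cases hw : dist u w ^ 2 + dist v w ^ 2 ≤ dist u v ^ 2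
  · obtain ⟨x, hxw, hxu, hxv⟩ :=
      exists_dist_le_one_of_sq_add_sq_le (u := w) huv (by rwa [dist_comm w u, dist_comm w v])
    exact ⟨x, hxu, hxv, hxw⟩
  push Not at hu hv hw
  have hsq {p q : E} (h : dist p q ≤ √3) : dist p q ^ 2 ≤ 3 :=
    (Real.le_sqrt dist_nonneg (by norm_num)).1 h
  have hS : 0 < heron (dist v w ^ 2) (dist u w ^ 2) (dist u v ^ 2) :=
    heron_pos (by linarith) (by linarith) (by linarith)
  have hR := div_le_one_of_le₀ (mul_mul_le_heron (hsq hvw) (hsq huw) (hsq huv)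
    (by linarith) (by linarith) (by linarith)) hS.le
  obtain ⟨x, hxu, hxv, hxw⟩ := exists_circumcenter rfl rfl rfl hS.ne'
  have hle {p : E} (h : dist x p ^ 2 ≤ 1) : dist x p ≤ 1 :=
    (pow_le_one_iff_of_nonneg dist_nonneg two_ne_zero).1 h
  exact ⟨x, hle (hxu.trans_le hR), hle (hxv.trans_le hR), hle (hxw.trans_le hR)⟩

theorem exists_forall_dist_le_one_of_card_le_three {s : Finset E} (hs : #s ≤ 3)
    (hdiam : ∀ u ∈ s, ∀ v ∈ s, dist u v ≤ √3) : ∃ x, ∀ v ∈ s, dist x v ≤ 1 := by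
  classical
  obtain rfl | hne := s.eq_empty_or_nonempty
  · exact ⟨0, by simp⟩
  obtain ⟨u, hu, v, hv, w, hw, hsub⟩ := hne.exists_subset_triple hs
  obtain ⟨x, hxu, hxv, hxw⟩ := exists_dist_le_one_of_dist_le_sqrt_three
    (hdiam u hu v hv) (hdiam u hu w hw) (hdiam v hv w hw)
  refine ⟨x, fun p hp => ?_⟩
  obtain rfl | rfl | rfl : p = u ∨ p = v ∨ p = w := by simpa using hsub hp
  exacts [hxu, hxv, hxw]

theorem exists_forall_dist_le_one_of_finrank_le_two [FiniteDimensional ℝ E]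
    (hE : finrank ℝ E ≤ 2) {V : Finset E} (hV : ∀ u ∈ V, ∀ v ∈ V, dist u v ≤ √3) :
    ∃ x, ∀ v ∈ V, dist x v ≤ 1 := by
  obtain ⟨x, hx⟩ := Convex.helly_theorem' (𝕜 := ℝ) (F := fun v => closedBall v 1)
    (fun v _ => convex_closedBall v 1) fun I hIV hI => by
      obtain ⟨x, hx⟩ := exists_forall_dist_le_one_of_card_le_three (by omega)
        fun u hu v hv => hV u (hIV hu) v (hIV hv)
      exact ⟨x, Set.mem_iInter₂.2 fun v hv => mem_closedBall.2 (hx v hv)⟩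
  exact ⟨x, fun v hv => mem_closedBall.1 (Set.mem_iInter₂.1 hx v hv)⟩

end InnerProductSpace

theorem stmt_7_general (V : Finset (EuclideanSpace ℝ (Fin 2))) :
    (∃ u ∈ V, ∃ v ∈ V, Real.sqrt 3 < dist u v) ∨
    (∃ x : EuclideanSpace ℝ (Fin 2), ∀ v ∈ V, dist x v ≤ 1) := by
  refine or_iff_not_imp_left.2 fun hfar => ?_
  push Not at hfar
  exact exists_forall_dist_le_one_of_finrank_le_two (by simp) hfar

/-- Either a finite nonempty point set in the plane has two points at distance
greater than `√3`, or it is contained in some closed disk of radius 1. -/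
theorem stmt_7 (V : Finset (EuclideanSpace ℝ (Fin 2))) (hV : V.Nonempty) :
    (∃ u ∈ V, ∃ v ∈ V, Real.sqrt 3 < dist u v) ∨
    (∃ x : EuclideanSpace ℝ (Fin 2), ∀ v ∈ V, dist x v ≤ 1) :=
  stmt_7_general V
end

section
/- Let V be a finite set of points in ℝ² and let u, v ∈ V with dist(u,v) ≥ √3. Then the set of points w ∈ V with dist(w,u) ≤ 1 and dist(w,v) ≤ 1 is a clique in the unit disk graph: any two such points have distance at most 1. -/
/-- If `u` and `v` are two points at distance at least `√3`, then the common
neighbourhood of `u` and `v` in the unit disk graph is a clique. -/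
theorem stmt_8 (V : Finset (EuclideanSpace ℝ (Fin 2))) (u v : EuclideanSpace ℝ (Fin 2))
    (hu : u ∈ V) (hv : v ∈ V) (huv : Real.sqrt 3 ≤ dist u v) :
    ∀ w ∈ V, ∀ z ∈ V, dist w u ≤ 1 → dist w v ≤ 1 → dist z u ≤ 1 → dist z v ≤ 1 →
      dist w z ≤ 1 := by
  have hd2 : (3 : ℝ) ≤ dist u v ^ 2 := by
    have h3 : (0:ℝ) ≤ 3 := by norm_num
    nlinarith [Real.sq_sqrt h3, Real.sqrt_nonneg 3, dist_nonneg (x := u) (y := v)]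
  have key : ∀ w : EuclideanSpace ℝ (Fin 2), dist w u ≤ 1 → dist w v ≤ 1 →
      dist w (midpoint ℝ u v) ≤ 1 / 2 := by
    intro w hwu hwv
    have hpar := parallelogram_law_with_norm ℝ (w - u) (w - v)
    have h1 : (w - u) - (w - v) = v - u := by abel
    have h2 : w - midpoint ℝ u v = (2⁻¹ : ℝ) • ((w - u) + (w - v)) := by
      rw [midpoint_eq_smul_add, invOf_eq_inv]
      module
    have hdm : dist w (midpoint ℝ u v) = ‖(w - u) + (w - v)‖ / 2 := by
      rw [dist_eq_norm, h2, norm_smul]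
      simp [abs_of_nonneg]
      ring
    have hwu' : ‖w - u‖ ≤ 1 := by rwa [← dist_eq_norm]
    have hwv' : ‖w - v‖ ≤ 1 := by rwa [← dist_eq_norm]
    have hvu : dist u v ^ 2 = ‖v - u‖ ^ 2 := by rw [dist_eq_norm, ← norm_neg]; congr 1; abel
    rw [h1] at hpar
    have : ‖(w - u) + (w - v)‖ ^ 2 ≤ 1 := by
      nlinarith [norm_nonneg (w - u), norm_nonneg (w - v), norm_nonneg ((w-u)+(w-v))]
    rw [hdm]
    nlinarith [norm_nonneg ((w-u)+(w-v))]
  intro w _ z _ hwu hwv hzu hzv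
  calc dist w z ≤ dist w (midpoint ℝ u v) + dist z (midpoint ℝ u v) := dist_triangle_right _ _ _
    _ ≤ 1 / 2 + 1 / 2 := add_le_add (key w hwu hwv) (key z hzu hzv)
    _ = 1 := by norm_num
end

section
/- Let G be the unit disk graph on a finite point set in ℝ² with independence number at most 2, and let u, v be non-adjacent vertices such that all points of V(G) lie in one closed half-plane determined by the line through u and v. Then the set of common neighbours N(u) ∩ N(v) is a clique. -/
/-!
The common neighbours of `u` and `v` lie in the lens cut out by the unit disks about `u` and `v`,
and the half-plane hypothesis puts them all in the same half of it, on one side of the line `uv`.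
In coordinates along `v - u` and perpendicular to it, an elementary estimate shows that such a
half-lens has diameter at most the radius as soon as the centres are at least one radius apart.
In the plane, a linear functional vanishing on `v - u` is a multiple of the area form
`ω (v - u)`, which is how the half-plane is read off in these coordinates.
-/

theorem sub_sq_add_sub_sq_le_sq_of_half_lens {r c A B s t : ℝ} (hr : 0 ≤ r) (hrc : r ≤ c)
    (hst : 0 ≤ s * t) (hA : A ^ 2 + s ^ 2 ≤ r ^ 2) (hAc : (A - c) ^ 2 + s ^ 2 ≤ r ^ 2)
    (hB : B ^ 2 + t ^ 2 ≤ r ^ 2) (hBc : (B - c) ^ 2 + t ^ 2 ≤ r ^ 2) :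
    (A - B) ^ 2 + (s - t) ^ 2 ≤ r ^ 2 := by
  wlog hts : s ^ 2 ≤ t ^ 2 generalizing A B s t
  · have := this (by rwa [mul_comm]) hB hBc hA hAc (by linarith)
    rwa [sub_sq_comm A, sub_sq_comm s]
  have hs_t : (s - t) ^ 2 ≤ t ^ 2 - s ^ 2 := by nlinarith
  have hA0 : 0 ≤ A := by nlinarith
  have hAr : A ≤ r := by nlinarith
  have hB0 : 0 ≤ B := by nlinarith
  rcases le_total A B with hAB | hBA
  · nlinarith [mul_nonneg hA0 (by linarith : (0:ℝ) ≤ 2 * B - A)]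
  · nlinarith [mul_nonneg (by linarith : (0:ℝ) ≤ c - A) (by linarith : (0:ℝ) ≤ c + A - 2 * B)]

open Module
open scoped RealInnerProductSpace EuclideanSpace

namespace Orientation

variable {E : Type*} [NormedAddCommGroup E] [InnerProductSpace ℝ E] [Fact (finrank ℝ E = 2)]
  (o : Orientation ℝ E (Fin 2))

local notation "ω" => o.areaForm
local notation "J" => o.rightAngleRotation

theorem norm_sq_mul_apply_eq_inner_add_areaForm (f : E →ₗ[ℝ] ℝ) (a x : E) :
    ‖a‖ ^ 2 * f x = ⟪a, x⟫ * f a + ω a x * f (J a) := by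
  by_cases ha : a = 0
  · simp [ha]
  have h : ‖a‖ ^ 2 • f = f a • innerₛₗ ℝ a + f (J a) • ω a := by
    refine (o.basisRightAngleRotation a ha).ext fun i => ?_
    fin_cases i <;> simp [mul_comm]
  simpa [mul_comm] using congr($h x)

theorem areaForm_mul_areaForm_nonneg {f : E →ₗ[ℝ] ℝ} (hf : f ≠ 0) {a x y : E} (hfa : f a = 0)
    (hxy : 0 ≤ f x * f y) : 0 ≤ ω a x * ω a y := by
  by_cases ha : a = 0
  · simp [ha]
  have hf' : ∀ z, ‖a‖ ^ 2 * f z = ω a z * f (J a) := by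
    simpa [hfa] using o.norm_sq_mul_apply_eq_inner_add_areaForm f a
  have hJa : f (J a) ≠ 0 := by
    refine fun h0 => hf (LinearMap.ext fun z => ?_)
    have := hf' z
    simp_all
  have key : ‖a‖ ^ 2 * ‖a‖ ^ 2 * (f x * f y) = ω a x * ω a y * f (J a) ^ 2 := by
    linear_combination (‖a‖ ^ 2 * f y) * hf' x + (ω a x * f (J a)) * hf' y
  exact nonneg_of_mul_nonneg_left (key ▸ mul_nonneg (by positivity) hxy) (sq_pos_of_ne_zero hJa)

theorem norm_sub_le_of_areaForm_mul_nonneg {r : ℝ} (hr : 0 < r) {e p q : E} (he : r ≤ ‖e‖)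
    (hp : ‖p‖ ≤ r) (hpe : ‖p - e‖ ≤ r) (hq : ‖q‖ ≤ r) (hqe : ‖q - e‖ ≤ r)
    (hside : 0 ≤ ω e p * ω e q) : ‖p - q‖ ≤ r := by
  have hsq := o.inner_sq_add_areaForm_sq e
  have hdisk : ∀ x : E, ‖x‖ ≤ r → ⟪e, x⟫ ^ 2 + ω e x ^ 2 ≤ (‖e‖ * r) ^ 2 := by
    intro x hx
    rw [hsq, mul_pow]
    gcongr
  have hshift : ∀ x : E, ⟪e, x - e⟫ = ⟪e, x⟫ - ‖e‖ ^ 2 ∧ ω e (x - e) = ω e x := by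
    simp [inner_sub_right]
  have key := sub_sq_add_sub_sq_le_sq_of_half_lens (c := ‖e‖ ^ 2) (by positivity)
    (by rw [sq]; gcongr) hside (hdisk p hp) (by simpa [hshift] using hdisk _ hpe) (hdisk q hq)
    (by simpa [hshift] using hdisk _ hqe)
  rw [← inner_sub_right, ← map_sub, hsq, mul_pow] at key
  have he0 : 0 < ‖e‖ ^ 2 := pow_pos (hr.trans_le he) 2
  exact le_of_pow_le_pow_left₀ two_ne_zero hr.le (le_of_mul_le_mul_left key he0)

theorem dist_le_of_areaForm_mul_nonneg {r : ℝ} (hr : 0 < r) {u v w z : E}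
    (huv : r ≤ dist u v) (hwu : dist w u ≤ r) (hwv : dist w v ≤ r) (hzu : dist z u ≤ r)
    (hzv : dist z v ≤ r) (hside : 0 ≤ ω (v - u) (w - u) * ω (v - u) (z - u)) :
    dist w z ≤ r := by
  rw [dist_comm] at huv
  rw [dist_eq_norm] at *
  simpa using o.norm_sub_le_of_areaForm_mul_nonneg hr huv hwu (by simpa using hwv) hzu
    (by simpa using hzv) hside

end Orientation

theorem stmt_11_general (V : Finset (EuclideanSpace ℝ (Fin 2)))
    (u v : EuclideanSpace ℝ (Fin 2))
    (huv : 1 < dist u v)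
    (f : EuclideanSpace ℝ (Fin 2) →ₗ[ℝ] ℝ) (hf : f ≠ 0)
    (hfu : f u = f v) (hside : ∀ w ∈ V, f w ≤ f u) :
    ∀ w ∈ V, ∀ z ∈ V, dist w u ≤ 1 → dist w v ≤ 1 → dist z u ≤ 1 → dist z v ≤ 1 →
      dist w z ≤ 1 := by
  intro w hw z hz hwu hwv hzu hzv
  let o : Orientation ℝ (EuclideanSpace ℝ (Fin 2)) (Fin 2) :=
    (EuclideanSpace.basisFun (Fin 2) ℝ).toBasis.orientation
  have hbelow : ∀ x ∈ V, f (x - u) ≤ 0 := fun x hx => by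
    simpa [map_sub] using hside x hx
  refine o.dist_le_of_areaForm_mul_nonneg one_pos huv.le hwu hwv hzu hzv ?_
  exact o.areaForm_mul_areaForm_nonneg hf (by simp [hfu])
    (mul_nonneg_of_nonpos_of_nonpos (hbelow w hw) (hbelow z hz))

/-- If a unit disk graph has independence number at most 2 and `u, v` are non-adjacent
vertices with all of `V` on one side of the line through `u` and `v`, then the set of
common neighbours of `u` and `v` is a clique. -/
theorem stmt_11 (V : Finset (EuclideanSpace ℝ (Fin 2)))
    (hα : ∀ a ∈ V, ∀ b ∈ V, ∀ c ∈ V, a ≠ b → a ≠ c → b ≠ c →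
      dist a b ≤ 1 ∨ dist a c ≤ 1 ∨ dist b c ≤ 1)
    (u v : EuclideanSpace ℝ (Fin 2)) (hu : u ∈ V) (hv : v ∈ V)
    (huv : 1 < dist u v)
    (f : EuclideanSpace ℝ (Fin 2) →ₗ[ℝ] ℝ) (hf : f ≠ 0)
    (hfu : f u = f v) (hside : ∀ w ∈ V, f w ≤ f u) :
    ∀ w ∈ V, ∀ z ∈ V, dist w u ≤ 1 → dist w v ≤ 1 → dist z u ≤ 1 → dist z v ≤ 1 →
      dist w z ≤ 1 :=
  stmt_11_general V u v huv f hf hfu hside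
end

section
/- Let G be the unit disk graph on a finite point set with independence number at most 2, let u, v be non-adjacent vertices with all of V(G) on one side of the line through u and v. Then N(u) is the union of two cliques and N(v) \ N(u) is a clique. -/
/-!
Split `N(u)` into the common neighbours of `u` and `v` and the rest. Since the independence
number is at most 2, any two vertices far from a common vertex `z` are adjacent; with `z = v`
and `z = u` this makes `N(u) \ N(v)` and `N(v) \ N(u)` cliques. The common neighbours lie in
the half of the lens `B(u, 1) ∩ B(v, 1)` on one side of the line `uv`, which has diameter at
most 1 because `|uv| ≥ 1`: with `u = 0`, `v = (d, 0)`, a point of the half-lens at height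
`p ≥ 0` has abscissa in `[d - s, s]` where `s = √(1 - p²)`, and this reduces the claim to
`(s + t - 1)² + (p - q)² ≤ 1` for unit vectors `(s, p)`, `(t, q)` in the first quadrant.
-/

theorem add_sub_one_sq_add_sub_sq_le_one {s p t q : ℝ} (hs : 0 ≤ s) (ht : 0 ≤ t)
    (hp : 0 ≤ p) (hq : 0 ≤ q) (hsp : s ^ 2 + p ^ 2 = 1) (htq : t ^ 2 + q ^ 2 = 1) :
    (s + t - 1) ^ 2 + (p - q) ^ 2 ≤ 1 := by
  have hs1 : s ≤ 1 := by nlinarith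
  have ht1 : t ≤ 1 := by nlinarith
  have hprod : 0 ≤ (1 - s) * (1 - t) := mul_nonneg (by linarith) (by linarith)
  -- for `(s, p) = (cos α, sin α)`, `(t, q) = (cos β, sin β)` this is `tan (α/2) tan (β/2) ≤ 1`
  have key : (1 - s) * (1 - t) ≤ p * q := by
    refine (pow_le_pow_iff_left₀ hprod (mul_nonneg hp hq) two_ne_zero).1 ?_
    have : (p * q) ^ 2 = (1 - s) * (1 - t) * ((1 + s) * (1 + t)) := by
      linear_combination (1 - t ^ 2) * hsp + p ^ 2 * htq
    rw [this, sq]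
    exact mul_le_mul_of_nonneg_left (by nlinarith) hprod
  linear_combination hsp + htq + 2 * key

theorem sub_sq_add_sub_sq_le_one_of_mem_lens {d x p y q : ℝ} (hd : 1 ≤ d) (hpq : 0 ≤ p * q)
    (hx : x ^ 2 + p ^ 2 ≤ 1) (hx' : (x - d) ^ 2 + p ^ 2 ≤ 1)
    (hy : y ^ 2 + q ^ 2 ≤ 1) (hy' : (y - d) ^ 2 + q ^ 2 ≤ 1) :
    (x - y) ^ 2 + (p - q) ^ 2 ≤ 1 := by
  wlog hpq' : 0 ≤ p ∧ 0 ≤ q generalizing p q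
  · have hneg : p ≤ 0 ∧ q ≤ 0 := (mul_nonneg_iff.1 hpq).resolve_left hpq'
    have := this (p := -p) (q := -q) (by linarith) (by simpa using hx) (by simpa using hx')
      (by simpa using hy) (by simpa using hy') ⟨by linarith, by linarith⟩
    linear_combination this
  obtain ⟨hp, hq⟩ := hpq'
  set s := √(1 - p ^ 2)
  set t := √(1 - q ^ 2)
  have hs : s ^ 2 = 1 - p ^ 2 := Real.sq_sqrt (by nlinarith)
  have ht : t ^ 2 = 1 - q ^ 2 := Real.sq_sqrt (by nlinarith)
  obtain ⟨hxs₁, hxs₂⟩ : -s ≤ x ∧ x ≤ s := abs_le.1 (Real.abs_le_sqrt (by linarith))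
  obtain ⟨hxs'₁, hxs'₂⟩ : -s ≤ x - d ∧ x - d ≤ s := abs_le.1 (Real.abs_le_sqrt (by linarith))
  obtain ⟨hyt₁, hyt₂⟩ : -t ≤ y ∧ y ≤ t := abs_le.1 (Real.abs_le_sqrt (by linarith))
  obtain ⟨hyt'₁, hyt'₂⟩ : -t ≤ y - d ∧ y - d ≤ t := abs_le.1 (Real.abs_le_sqrt (by linarith))
  calc (x - y) ^ 2 + (p - q) ^ 2 ≤ (s + t - d) ^ 2 + (p - q) ^ 2 := by
        gcongr ?_ + _; exact sq_le_sq' (by linarith) (by linarith)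
    _ ≤ (s + t - 1) ^ 2 + (p - q) ^ 2 := by
        gcongr; linarith
    _ ≤ 1 := add_sub_one_sq_add_sub_sq_le_one (Real.sqrt_nonneg _) (Real.sqrt_nonneg _) hp hq
        (by linarith) (by linarith)

theorem dist_le_one_of_one_lt_dist_of_one_lt_dist {α : Type*} [PseudoMetricSpace α] {V : Set α}
    (hα : ∀ a ∈ V, ∀ b ∈ V, ∀ c ∈ V, a ≠ b → a ≠ c → b ≠ c →
      dist a b ≤ 1 ∨ dist a c ≤ 1 ∨ dist b c ≤ 1)
    {x y z : α} (hx : x ∈ V) (hy : y ∈ V) (hz : z ∈ V) (hxz : 1 < dist x z) (hyz : 1 < dist y z) :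
    dist x y ≤ 1 := by
  by_cases hxy : x = y
  · simp [hxy]
  have hxz' : x ≠ z := by rintro rfl; simp at hxz; linarith
  have hyz' : y ≠ z := by rintro rfl; simp at hyz; linarith
  rcases hα x hx y hy z hz hxy hxz' hyz' with h | h | h
  · exact h
  · linarith
  · linarith

def cross (a b : EuclideanSpace ℝ (Fin 2)) : ℝ := a 0 * b 1 - a 1 * b 0

theorem cross_smul_add_cross_smul_add_cross_smul (e z w : EuclideanSpace ℝ (Fin 2)) :
    cross e z • w + cross w e • z + cross z w • e = 0 := by
  ext i
  fin_cases i <;> simp [cross] <;> ring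

theorem cross_mul_cross_nonneg_of_map_nonpos {f : EuclideanSpace ℝ (Fin 2) →ₗ[ℝ] ℝ} (hf : f ≠ 0)
    {e w w' : EuclideanSpace ℝ (Fin 2)} (he : f e = 0) (hw : f w ≤ 0) (hw' : f w' ≤ 0) :
    0 ≤ cross e w * cross e w' := by
  obtain ⟨z, hz⟩ : ∃ z, f z ≠ 0 := by
    by_contra! h
    exact hf (LinearMap.ext h)
  have hprop : ∀ w, cross e z * f w = cross e w * f z := by
    intro w
    have := congrArg f (cross_smul_add_cross_smul_add_cross_smul e z w)
    simp only [map_add, map_smul, smul_eq_mul, he, map_zero] at this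
    have hsymm : cross w e = - cross e w := by simp only [cross]; ring
    linear_combination this - f z * hsymm
  have : 0 ≤ f z ^ 2 * (cross e w * cross e w') := by
    have := mul_nonneg (sq_nonneg (cross e z)) (mul_nonneg_of_nonpos_of_nonpos hw hw')
    linear_combination this + (cross e z * f w') * hprop w + (cross e w * f z) * hprop w'
  exact (mul_nonneg_iff_of_pos_left (by positivity)).1 this

theorem dist_sq_eq_coord (x y : EuclideanSpace ℝ (Fin 2)) :
    dist x y ^ 2 = (x 0 - y 0) ^ 2 + (x 1 - y 1) ^ 2 := by
  simp [EuclideanSpace.dist_sq_eq, Fin.sum_univ_two, Real.dist_eq, sq_abs]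

/-- Coordinates of `w` in the orthonormal frame with origin `u` and first axis along `v - u`. -/
noncomputable def frameCoord (u v w : EuclideanSpace ℝ (Fin 2)) : ℝ × ℝ :=
  (((w 0 - u 0) * (v 0 - u 0) + (w 1 - u 1) * (v 1 - u 1)) / dist u v,
    cross (v - u) (w - u) / dist u v)

theorem frameCoord_left (u v : EuclideanSpace ℝ (Fin 2)) : frameCoord u v u = (0, 0) := by
  simp [frameCoord, cross]

theorem frameCoord_right {u v : EuclideanSpace ℝ (Fin 2)} (huv : u ≠ v) :
    frameCoord u v v = (dist u v, 0) := by
  have hd : dist u v ≠ 0 := dist_ne_zero.2 huv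
  have := dist_sq_eq_coord u v
  simp only [frameCoord, cross, Prod.mk.injEq]
  refine ⟨?_, by ring⟩
  field_simp
  linear_combination -this

theorem dist_sq_eq_frameCoord {u v : EuclideanSpace ℝ (Fin 2)} (huv : u ≠ v)
    (x y : EuclideanSpace ℝ (Fin 2)) :
    dist x y ^ 2 = ((frameCoord u v x).1 - (frameCoord u v y).1) ^ 2 +
      ((frameCoord u v x).2 - (frameCoord u v y).2) ^ 2 := by
  have hd : dist u v ≠ 0 := dist_ne_zero.2 huv
  have := dist_sq_eq_coord u v
  simp only [frameCoord, cross, dist_sq_eq_coord, PiLp.sub_apply]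
  field_simp
  rw [this]
  ring

theorem dist_le_one_of_mem_lens {u v x y : EuclideanSpace ℝ (Fin 2)} (huv : 1 ≤ dist u v)
    (hxu : dist x u ≤ 1) (hxv : dist x v ≤ 1) (hyu : dist y u ≤ 1) (hyv : dist y v ≤ 1)
    (hside : 0 ≤ cross (v - u) (x - u) * cross (v - u) (y - u)) : dist x y ≤ 1 := by
  have huv' : u ≠ v := by rintro rfl; simp at huv; linarith
  have hpq : 0 ≤ (frameCoord u v x).2 * (frameCoord u v y).2 := by
    rw [frameCoord, frameCoord, div_mul_div_comm]
    exact div_nonneg hside (mul_self_nonneg _)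
  simp only [← sq_le_one_iff₀ dist_nonneg, dist_sq_eq_frameCoord huv', frameCoord_left,
    frameCoord_right huv', sub_zero] at hxu hxv hyu hyv ⊢
  exact sub_sq_add_sub_sq_le_one_of_mem_lens huv hpq hxu hxv hyu hyv

/-- If a unit disk graph has independence number at most 2 and `u, v` are non-adjacent
vertices with all of `V` on one side of the line through `u` and `v`, then `N(u)` is
the union of two cliques while `N(v) \ N(u)` is a clique. -/
theorem stmt_12 (V : Finset (EuclideanSpace ℝ (Fin 2)))
    (hα : ∀ a ∈ V, ∀ b ∈ V, ∀ c ∈ V, a ≠ b → a ≠ c → b ≠ c →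
      dist a b ≤ 1 ∨ dist a c ≤ 1 ∨ dist b c ≤ 1)
    (u v : EuclideanSpace ℝ (Fin 2)) (hu : u ∈ V) (hv : v ∈ V)
    (huv : 1 < dist u v)
    (f : EuclideanSpace ℝ (Fin 2) →ₗ[ℝ] ℝ) (hf : f ≠ 0)
    (hfu : f u = f v) (hside : ∀ w ∈ V, f w ≤ f u) :
    (∃ A B : Set (EuclideanSpace ℝ (Fin 2)),
      {w | w ∈ V ∧ w ≠ u ∧ dist w u ≤ 1} = A ∪ B ∧
      (∀ x ∈ A, ∀ y ∈ A, dist x y ≤ 1) ∧ (∀ x ∈ B, ∀ y ∈ B, dist x y ≤ 1)) ∧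
    (∀ x ∈ {w | w ∈ V ∧ w ≠ v ∧ dist w v ≤ 1} \ {w | w ∈ V ∧ w ≠ u ∧ dist w u ≤ 1},
     ∀ y ∈ {w | w ∈ V ∧ w ≠ v ∧ dist w v ≤ 1} \ {w | w ∈ V ∧ w ≠ u ∧ dist w u ≤ 1},
      dist x y ≤ 1) := by
  have hsame : ∀ x ∈ V, ∀ y ∈ V, 0 ≤ cross (v - u) (x - u) * cross (v - u) (y - u) :=
    fun x hx y hy => cross_mul_cross_nonneg_of_map_nonpos hf (by rw [map_sub, hfu, sub_self])
      (by simpa [map_sub] using hside x hx) (by simpa [map_sub] using hside y hy)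
  have hfar : ∀ w ∈ V, dist w v ≤ 1 → w ∉ {w | w ∈ V ∧ w ≠ u ∧ dist w u ≤ 1} → 1 < dist w u := by
    intro w hw hwv hwu
    by_contra! h
    exact hwu ⟨hw, by rintro rfl; linarith, h⟩
  refine ⟨⟨{w | w ∈ V ∧ w ≠ u ∧ dist w u ≤ 1 ∧ dist w v ≤ 1},
    {w | w ∈ V ∧ w ≠ u ∧ dist w u ≤ 1 ∧ 1 < dist w v}, ?_, ?_, ?_⟩, ?_⟩
  · ext w
    simp only [Set.mem_ofPred_eq, Set.mem_union, ← and_or_left, le_or_gt, and_true]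
  · rintro x ⟨hx, -, hxu, hxv⟩ y ⟨hy, -, hyu, hyv⟩
    exact dist_le_one_of_mem_lens huv.le hxu hxv hyu hyv (hsame x hx y hy)
  · rintro x ⟨hx, -, -, hxv⟩ y ⟨hy, -, -, hyv⟩
    exact dist_le_one_of_one_lt_dist_of_one_lt_dist hα hx hy hv hxv hyv
  · rintro x ⟨⟨hx, -, hxv⟩, hxu⟩ y ⟨⟨hy, -, hyv⟩, hyu⟩
    exact dist_le_one_of_one_lt_dist_of_one_lt_dist hα hx hy hu (hfar x hx hxv hxu)
      (hfar y hy hyv hyu)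
end

section
/- For k ≥ 1, let C be the graph on vertices {0, 1, …, 3k−2} in which i and j are adjacent iff the cyclic distance min(|i−j|, 3k−1−|i−j|) is at most k−1. Then C has independence number 2, clique number k, and chromatic number at least ⌈(3k−1)/2⌉. -/
private def circR (k x v : ℕ) : ℕ := if x ≤ v then v - x else v + (3*k-1) - x
private def circG (k x v : ℕ) : ℤ :=
  if circR k x v < k then (circR k x v : ℤ) else (circR k x v : ℤ) - (3*k-1)

private lemma circ_key (k x v w : ℕ) (hk : 1 ≤ k) (hx : x < 3*k-1) (hv : v < 3*k-1)
    (hw : w < 3*k-1)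
    (hvx : v = x ∨ min (((v:ℤ)-x).natAbs) (3*k-1 - ((v:ℤ)-x).natAbs) ≤ k-1)
    (hwx : w = x ∨ min (((w:ℤ)-x).natAbs) (3*k-1 - ((w:ℤ)-x).natAbs) ≤ k-1)
    (hvw : v = w ∨ min (((v:ℤ)-w).natAbs) (3*k-1 - ((v:ℤ)-w).natAbs) ≤ k-1) :
    circG k x v ≤ circG k x w + ((k:ℤ)-1) ∧ (circG k x v = circG k x w → v = w) := by
  unfold circG circR
  split_ifs <;> omega

/-- The circulant graph `C_{3k-1}^k` (vertices `0, …, 3k-2`, adjacency iff cyclic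
distance at most `k-1`) has independence number 2, clique number `k`, and chromatic
number at least `⌈(3k-1)/2⌉`. -/
theorem stmt_16 (k : ℕ) (hk : 1 ≤ k) (C : SimpleGraph (Fin (3 * k - 1)))
    (hC : ∀ i j : Fin (3 * k - 1), C.Adj i j ↔ i ≠ j ∧
      min ((i.val : ℤ) - (j.val : ℤ)).natAbs
        ((3 * k - 1) - ((i.val : ℤ) - (j.val : ℤ)).natAbs) ≤ k - 1) :
    ((∃ s : Finset (Fin (3 * k - 1)),
        (∀ a ∈ s, ∀ b ∈ s, a ≠ b → ¬ C.Adj a b) ∧ s.card = 2) ∧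
      (∀ s : Finset (Fin (3 * k - 1)),
        (∀ a ∈ s, ∀ b ∈ s, a ≠ b → ¬ C.Adj a b) → s.card ≤ 2)) ∧
    C.cliqueNum = k ∧
    (((3 * k - 1 + 1) / 2 : ℕ) : ℕ∞) ≤ C.chromaticNumber := by
  have hn0 : 0 < 3 * k - 1 := by omega
  have hnk : k < 3 * k - 1 ∨ k = 1 := by omega
  -- independence number upper bound, stated as a reusable fact
  have indep_le : ∀ s : Finset (Fin (3 * k - 1)),
      (∀ a ∈ s, ∀ b ∈ s, a ≠ b → ¬ C.Adj a b) → s.card ≤ 2 := by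
    intro s hs
    by_contra h
    push_neg at h
    obtain ⟨a, b, c, ha, hb, hc, hab, hac, hbc⟩ := Finset.two_lt_card_iff.mp h
    have fab : ¬ C.Adj a b := hs a ha b hb hab
    have fac : ¬ C.Adj a c := hs a ha c hc hac
    have fbc : ¬ C.Adj b c := hs b hb c hc hbc
    rw [hC] at fab fac fbc
    push_neg at fab fac fbc
    have hab' : (a:ℕ) ≠ b := fun h' => hab (Fin.ext h')
    have hac' : (a:ℕ) ≠ c := fun h' => hac (Fin.ext h')
    have hbc' : (b:ℕ) ≠ c := fun h' => hbc (Fin.ext h')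
    have d1 := fab hab
    have d2 := fac hac
    have d3 := fbc hbc
    have ba := a.isLt; have bb := b.isLt; have bc := c.isLt
    omega
  refine ⟨⟨?_, indep_le⟩, ?_, ?_⟩
  · -- independent set of size 2: {0, k} (for k = 1, {0, 1} with n = 2; 0 and k work since k < n)
    have hkn : k < 3 * k - 1 := by omega
    refine ⟨{⟨0, hn0⟩, ⟨k, hkn⟩}, ?_, ?_⟩
    · intro a ha b hb hab hadj
      rw [hC] at hadj
      simp only [Finset.mem_insert, Finset.mem_singleton] at ha hb
      have := hadj.2
      have h2 := hadj.2
      rcases ha with rfl|rfl <;> rcases hb with rfl|rfl <;>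
        first
          | exact hab rfl
          | (simp only [Fin.val_mk] at h2; omega)
    · rw [Finset.card_insert_of_notMem (by simp; omega)]
      simp
  · -- clique number = k
    have hmem : ∀ m ∈ Finset.range k, m < 3 * k - 1 := by intro m hm; simp at hm; omega
    have hclique : C.IsClique ((Finset.range k).attachFin hmem) := by
      intro a ha b hb hab
      rw [Finset.mem_coe, Finset.mem_attachFin] at ha hb
      rw [Finset.mem_range] at ha hb
      rw [hC]
      refine ⟨hab, ?_⟩
      have : (a:ℕ) ≠ b := fun h' => hab (Fin.ext h')
      omega
    have hcard : ((Finset.range k).attachFin hmem).card = k := by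
      rw [Finset.card_attachFin, Finset.card_range]
    -- upper bound on any clique
    have clique_le : ∀ t : Finset (Fin (3 * k - 1)), C.IsClique t → t.card ≤ k := by
      intro t ht
      rcases t.eq_empty_or_nonempty with rfl | ⟨x, hxt⟩
      · simp
      have hcond : ∀ v ∈ t, ∀ w ∈ t, (v:ℕ) = w ∨
          min (((v:ℕ):ℤ)-((w:ℕ):ℤ)).natAbs (3*k-1 - (((v:ℕ):ℤ)-((w:ℕ):ℤ)).natAbs) ≤ k-1 := by
        intro v hv w hw
        by_cases hvw : v = w
        · exact Or.inl (by rw [hvw])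
        · exact Or.inr ((hC v w).mp (ht hv hw hvw)).2
      set f : Fin (3 * k - 1) → ℤ := fun v => circG k x.val v.val with hf
      have key : ∀ v ∈ t, ∀ w ∈ t,
          f v ≤ f w + ((k:ℤ)-1) ∧ (f v = f w → v = w) := by
        intro v hv w hw
        have h1 := circ_key k x.val v.val w.val hk x.isLt v.isLt w.isLt
          (hcond v hv x hxt) (hcond w hw x hxt) (hcond v hv w hw)
        exact ⟨h1.1, fun h => Fin.ext (h1.2 h)⟩
      have hinj : Set.InjOn f t := fun v hv w hw h => (key v hv w hw).2 h
      have hScard : (t.image f).card = t.card := Finset.card_image_of_injOn hinj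
      have hSne : (t.image f).Nonempty := ⟨f x, Finset.mem_image_of_mem f hxt⟩
      set m := (t.image f).min' hSne with hm
      have hsub : t.image f ⊆ Finset.Icc m (m + ((k:ℤ)-1)) := by
        intro s hsS
        rw [Finset.mem_Icc]
        obtain ⟨v, hv, rfl⟩ := Finset.mem_image.mp hsS
        have hmS : m ∈ t.image f := (t.image f).min'_mem hSne
        obtain ⟨w, hw, hweq⟩ := Finset.mem_image.mp hmS
        exact ⟨(t.image f).min'_le _ hsS, by rw [← hweq]; exact (key v hv w hw).1⟩
      have := Finset.card_le_card hsub
      rw [hScard, Int.card_Icc] at this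
      omega
    refine le_antisymm ?_ ?_
    · have hne : {n | ∃ s, C.IsNClique n s}.Nonempty :=
        ⟨0, ∅, SimpleGraph.isNClique_empty.mpr rfl⟩
      apply csSup_le hne
      rintro n ⟨s, hs⟩
      rw [← hs.2]
      exact clique_le s hs.1
    · have := @SimpleGraph.IsClique.card_le_cliqueNum _ C _ _ hclique
      rw [hcard] at this
      exact this
  · -- chromatic number lower bound
    rw [SimpleGraph.chromaticNumber_eq_biInf]
    refine le_iInf₂ fun m hm => ?_
    rw [Nat.cast_le]
    obtain ⟨c⟩ := hm
    have hsum := Finset.card_eq_sum_card_fiberwise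
      (f := fun v : Fin (3 * k - 1) => c v) (s := Finset.univ) (t := Finset.univ)
      (fun v _ => Finset.mem_univ _)
    have hfib : ∀ b : Fin m,
        (Finset.univ.filter (fun v : Fin (3 * k - 1) => c v = b)).card ≤ 2 := by
      intro b
      apply indep_le
      intro a ha a' ha' haa' hadj
      rw [Finset.mem_filter] at ha ha'
      exact c.valid hadj (ha.2.trans ha'.2.symm)
    have hle : (Finset.univ : Finset (Fin (3 * k - 1))).card ≤ 2 * m := by
      rw [hsum]
      calc ∑ b : Fin m, (Finset.univ.filter (fun v => c v = b)).card
          ≤ ∑ _b : Fin m, 2 := Finset.sum_le_sum (fun b _ => hfib b)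
        _ = 2 * m := by simp [Finset.sum_const, Finset.card_univ, mul_comm]
    rw [Finset.card_univ, Fintype.card_fin] at hle
    omega
end

section
/- In any unit disk graph, the common neighbourhood of two non-adjacent vertices induces a co-bipartite graph: if dist(u,v) > 1, then the set of common neighbours of u and v can be partitioned into two cliques. -/
lemma core1' (D A0 A1 B0 B1 : ℝ) (hD : 1 < D)
    (hA2 : (A0-D)^2+A1^2 ≤ D)
    (hB1 : B0^2+B1^2 ≤ D)
    (ha : 0 ≤ A1) (h1 : A1 ≤ B1) (h0 : A0 ≤ B0) :
    (A0-B0)^2+(A1-B1)^2 ≤ D := by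
  have hA0 : 0 < A0 := by nlinarith [sq_nonneg A1]
  nlinarith [mul_nonneg hA0.le (sub_nonneg.2 h0), mul_nonneg ha (sub_nonneg.2 h1)]

lemma core' (D A0 A1 B0 B1 : ℝ) (hD : 1 < D)
    (hA1 : A0^2+A1^2 ≤ D) (hA2 : (A0-D)^2+A1^2 ≤ D)
    (hB1 : B0^2+B1^2 ≤ D) (hB2 : (B0-D)^2+B1^2 ≤ D)
    (ha : 0 ≤ A1) (hb : 0 ≤ B1) : (A0-B0)^2+(A1-B1)^2 ≤ D := by
  rcases le_total A1 B1 with h1 | h1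
  · rcases le_total A0 B0 with h0 | h0
    · exact core1' D A0 A1 B0 B1 hD hA2 hB1 ha h1 h0
    · have := core1' D (D-A0) A1 (D-B0) B1 hD (by nlinarith) (by nlinarith) ha h1 (by linarith)
      nlinarith [this]
  · rcases le_total B0 A0 with h0 | h0
    · have := core1' D B0 B1 A0 A1 hD hB2 hA1 hb h1 h0
      nlinarith [this]
    · have := core1' D (D-B0) B1 (D-A0) A1 hD (by nlinarith) (by nlinarith) hb h1 (by linarith)
      nlinarith [this]

/-- Half-lens lemma in pure real coordinates (relative to u = origin, e = v - u). -/
lemma lens (e0 e1 a0 a1 b0 b1 : ℝ) (hD : 1 < e0^2+e1^2)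
    (hxu : a0^2+a1^2 ≤ 1) (hxv : (a0-e0)^2+(a1-e1)^2 ≤ 1)
    (hyu : b0^2+b1^2 ≤ 1) (hyv : (b0-e0)^2+(b1-e1)^2 ≤ 1)
    (hxs : 0 ≤ e0*a1 - e1*a0) (hys : 0 ≤ e0*b1 - e1*b0) :
    (a0-b0)^2+(a1-b1)^2 ≤ 1 := by
  have hD0 : (0:ℝ) < e0^2+e1^2 := by linarith
  have idxu : (e0*a0+e1*a1)^2 + (e0*a1-e1*a0)^2 = (e0^2+e1^2)*(a0^2+a1^2) := by ring
  have idxv : (e0*a0+e1*a1 - (e0^2+e1^2))^2 + (e0*a1-e1*a0)^2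
      = (e0^2+e1^2)*((a0-e0)^2+(a1-e1)^2) := by ring
  have idyu : (e0*b0+e1*b1)^2 + (e0*b1-e1*b0)^2 = (e0^2+e1^2)*(b0^2+b1^2) := by ring
  have idyv : (e0*b0+e1*b1 - (e0^2+e1^2))^2 + (e0*b1-e1*b0)^2
      = (e0^2+e1^2)*((b0-e0)^2+(b1-e1)^2) := by ring
  have mxu := mul_le_mul_of_nonneg_left hxu hD0.le
  have mxv := mul_le_mul_of_nonneg_left hxv hD0.le
  have myu := mul_le_mul_of_nonneg_left hyu hD0.le
  have myv := mul_le_mul_of_nonneg_left hyv hD0.le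
  have key := core' (e0^2+e1^2) (e0*a0+e1*a1) (e0*a1-e1*a0) (e0*b0+e1*b1) (e0*b1-e1*b0) hD
    (by rw [idxu]; linarith) (by rw [idxv]; linarith)
    (by rw [idyu]; linarith) (by rw [idyv]; linarith)
    hxs hys
  have id3 : (e0*a0+e1*a1 - (e0*b0+e1*b1))^2 + (e0*a1-e1*a0 - (e0*b1-e1*b0))^2
      = (e0^2+e1^2) * ((a0-b0)^2+(a1-b1)^2) := by ring
  have h4 : (e0^2+e1^2) * ((a0-b0)^2+(a1-b1)^2) ≤ (e0^2+e1^2) * 1 := by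
    rw [mul_one]; linarith [key, id3]
  exact le_of_mul_le_mul_left h4 hD0

lemma dist_sq' (x y : EuclideanSpace ℝ (Fin 2)) :
    dist x y = Real.sqrt ((x 0 - y 0)^2 + (x 1 - y 1)^2) := by
  rw [EuclideanSpace.dist_eq, Fin.sum_univ_two]
  simp [Real.dist_eq, sq_abs]

lemma dist_le_one_iff' (x y : EuclideanSpace ℝ (Fin 2)) :
    dist x y ≤ 1 ↔ (x 0 - y 0)^2 + (x 1 - y 1)^2 ≤ 1 := by
  rw [dist_sq']
  have hs : (0:ℝ) ≤ (x 0 - y 0)^2 + (x 1 - y 1)^2 := by positivity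
  constructor
  · intro h
    nlinarith [Real.sq_sqrt hs, Real.sqrt_nonneg ((x 0 - y 0)^2 + (x 1 - y 1)^2),
      sq_nonneg (1 - Real.sqrt ((x 0 - y 0)^2 + (x 1 - y 1)^2))]
  · intro h
    calc Real.sqrt _ ≤ Real.sqrt 1 := Real.sqrt_le_sqrt h
    _ = 1 := Real.sqrt_one

/-- In a unit disk graph, the common neighbourhood of two non-adjacent vertices
induces a co-bipartite graph: it is the union of two cliques. -/
theorem stmt_18 (V : Finset (EuclideanSpace ℝ (Fin 2)))
    (u v : EuclideanSpace ℝ (Fin 2)) (hu : u ∈ V) (hv : v ∈ V) (huv : 1 < dist u v) :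
    ∃ A B : Set (EuclideanSpace ℝ (Fin 2)),
      {w | w ∈ V ∧ dist w u ≤ 1 ∧ dist w v ≤ 1} = A ∪ B ∧
      (∀ x ∈ A, ∀ y ∈ A, dist x y ≤ 1) ∧ (∀ x ∈ B, ∀ y ∈ B, dist x y ≤ 1) := by
  have hD : 1 < (v 0 - u 0)^2 + (v 1 - u 1)^2 := by
    have h : dist u v = Real.sqrt ((u 0 - v 0)^2 + (u 1 - v 1)^2) := dist_sq' u v
    have h2 : Real.sqrt ((u 0 - v 0)^2 + (u 1 - v 1)^2) ^ 2 = (u 0 - v 0)^2 + (u 1 - v 1)^2 :=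
      Real.sq_sqrt (by positivity)
    have h3 : 1 * 1 < dist u v * dist u v := mul_lt_mul'' huv huv zero_le_one zero_le_one
    nlinarith [h, h2, h3]
  refine ⟨{w | w ∈ V ∧ dist w u ≤ 1 ∧ dist w v ≤ 1 ∧
            0 ≤ (v 0 - u 0)*(w 1 - u 1) - (v 1 - u 1)*(w 0 - u 0)},
          {w | w ∈ V ∧ dist w u ≤ 1 ∧ dist w v ≤ 1 ∧
            (v 0 - u 0)*(w 1 - u 1) - (v 1 - u 1)*(w 0 - u 0) ≤ 0},
          ?_, ?_, ?_⟩
  · ext w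
    simp only [Set.mem_setOf_eq, Set.mem_union]
    constructor
    · rintro ⟨h1, h2, h3⟩
      rcases le_total 0 ((v 0 - u 0)*(w 1 - u 1) - (v 1 - u 1)*(w 0 - u 0)) with h | h
      · exact Or.inl ⟨h1, h2, h3, h⟩
      · exact Or.inr ⟨h1, h2, h3, h⟩
    · rintro (⟨h1, h2, h3, _⟩ | ⟨h1, h2, h3, _⟩) <;> exact ⟨h1, h2, h3⟩
  · rintro x ⟨-, hxu, hxv, hxs⟩ y ⟨-, hyu, hyv, hys⟩
    rw [dist_le_one_iff'] at hxu hxv hyu hyv ⊢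
    have := lens (v 0 - u 0) (v 1 - u 1) (x 0 - u 0) (x 1 - u 1) (y 0 - u 0) (y 1 - u 1)
      hD (by linarith) (by linarith [hxv]) (by linarith) (by linarith [hyv])
      (by linarith) (by linarith)
    linarith [this]
  · rintro x ⟨-, hxu, hxv, hxs⟩ y ⟨-, hyu, hyv, hys⟩
    rw [dist_le_one_iff'] at hxu hxv hyu hyv ⊢
    have := lens (v 0 - u 0) (-(v 1 - u 1)) (x 0 - u 0) (-(x 1 - u 1)) (y 0 - u 0) (-(y 1 - u 1))
      (by linarith) (by linarith) (by linarith [hxv]) (by linarith) (by linarith [hyv])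
      (by linarith) (by linarith)
    linarith [this]
end

section
/- Let V be a finite nonempty set of points in ℝ². Then there exists a point x ∈ ℝ² minimizing the maximum distance to V: setting d = max_{v∈V} dist(x,v), every point y ∈ ℝ² satisfies max_{v∈V} dist(y,v) ≥ d, and moreover x lies in the convex hull of the set W = {v ∈ V : dist(x,v) = d}. -/
/-!
If `x` were not in the convex hull of its farthest points `W`, the nearest point `p` of that hull
would satisfy `⟪p - x, w - x⟫ > 0` for every `w ∈ W`. Moving `x` a little towards `p` then strictly
decreases the distance to every farthest point, while by continuity the other points stay closer
than the maximum, so the maximum distance drops: `x` was not a minimizer. A minimizer exists because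
the maximum distance is continuous and tends to infinity on a proper space.
-/

open Filter Topology RealInnerProductSpace

section MaxDist

variable {α : Type*} [PseudoMetricSpace α] [ProperSpace α]

theorem Finset.exists_forall_sup'_dist_le (V : Finset α) (hV : V.Nonempty) :
    ∃ x, ∀ y, V.sup' hV (dist x ·) ≤ V.sup' hV (dist y ·) := by
  obtain ⟨v₀, hv₀⟩ := hV
  have : Nonempty α := ⟨v₀⟩
  refine Continuous.exists_forall_le (by fun_prop) <|
    tendsto_atTop_mono (fun y => V.le_sup' (dist y ·) hv₀)
    (tendsto_dist_right_cocompact_atTop v₀)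

end MaxDist

section InnerProduct

variable {E : Type*} [NormedAddCommGroup E] [InnerProductSpace ℝ E]

theorem exists_forall_inner_sub_pos_of_notMem {K : Set E} (hKc : IsComplete K)
    (hK : Convex ℝ K) {x : E} (hx : x ∉ K) : ∃ z : E, ∀ w ∈ K, 0 < ⟪z, w - x⟫ := by
  rcases K.eq_empty_or_nonempty with rfl | hne
  · exact ⟨0, by simp⟩
  obtain ⟨p, hpK, hp⟩ := exists_norm_eq_iInf_of_complete_convex hne hKc hK x
  have hobtuse := (norm_eq_iInf_iff_real_inner_le_zero hK hpK).1 hp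
  have hpx : p - x ≠ 0 := sub_ne_zero.2 fun h => hx (h ▸ hpK)
  refine ⟨p - x, fun w hw => ?_⟩
  have hsplit : ⟪p - x, w - x⟫ = ‖p - x‖ ^ 2 - ⟪x - p, w - p⟫ := by
    rw [show w - x = (p - x) + (w - p) by abel, inner_add_right, real_inner_self_eq_norm_sq,
      ← neg_sub p x, inner_neg_left]
    ring
  rw [hsplit]
  nlinarith [hobtuse w hw, norm_pos_iff.2 hpx]

theorem eventually_dist_add_smul_lt {x w z : E} (h : 0 < ⟪z, w - x⟫) :
    ∀ᶠ t in 𝓝[>] (0 : ℝ), dist (x + t • z) w < dist x w := by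
  have hsmall : ∀ᶠ t in 𝓝[>] (0 : ℝ), t * ‖z‖ ^ 2 < 2 * ⟪z, w - x⟫ := by
    have hpos : (0 : ℝ) < 2 * ⟪z, w - x⟫ := by linarith
    refine nhdsWithin_le_nhds (Tendsto.eventually_lt_const hpos ?_)
    simpa using (tendsto_id (x := 𝓝 (0 : ℝ))).mul_const (‖z‖ ^ 2)
  filter_upwards [hsmall, self_mem_nhdsWithin] with t ht (htpos : 0 < t)
  refine lt_of_pow_lt_pow_left₀ 2 dist_nonneg ?_
  have hexpand : dist (x + t • z) w ^ 2 = dist x w ^ 2 - t * (2 * ⟪z, w - x⟫ - t * ‖z‖ ^ 2) := by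
    rw [dist_eq_norm, dist_eq_norm, show x + t • z - w = (x - w) + t • z by abel,
      norm_add_sq_real, real_inner_smul_right, norm_smul, Real.norm_eq_abs, mul_pow, sq_abs,
      real_inner_comm, ← neg_sub w x, inner_neg_right]
    ring
  rw [hexpand]
  nlinarith

theorem mem_convexHull_farthest_of_forall_exists_le {V : Finset E} {x : E} {d : ℝ}
    (hx : ∀ v ∈ V, dist x v ≤ d) (hmin : ∀ y, ∃ v ∈ V, d ≤ dist y v) :
    x ∈ convexHull ℝ {v | v ∈ V ∧ dist x v = d} := by
  set W : Set E := {v | v ∈ V ∧ dist x v = d}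
  by_contra hxW
  have hWfin : W.Finite := V.finite_toSet.subset fun v hv => hv.1
  obtain ⟨z, hz⟩ := exists_forall_inner_sub_pos_of_notMem
    ((hWfin.isCompact_convexHull ℝ).isComplete) (convex_convexHull ℝ W) hxW
  have hcloser : ∀ v ∈ V, ∀ᶠ t in 𝓝[>] (0 : ℝ), dist (x + t • z) v < d := by
    intro v hv
    rcases (hx v hv).lt_or_eq with hlt | heq
    · refine nhdsWithin_le_nhds (Tendsto.eventually_lt_const hlt ?_)
      simpa using (by fun_prop : Continuous fun t : ℝ => dist (x + t • z) v).tendsto 0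
    · exact heq ▸ eventually_dist_add_smul_lt (hz v (subset_convexHull ℝ W ⟨hv, heq⟩))
  obtain ⟨t, ht⟩ := ((eventually_all_finset V).2 hcloser).exists
  obtain ⟨v, hv, hle⟩ := hmin (x + t • z)
  exact (ht v hv).not_ge hle

end InnerProduct

/-- For a finite nonempty point set `V` in the plane there is a point `x` minimizing
the maximum distance `d` to `V`, and `x` lies in the convex hull of the set of points
of `V` at distance exactly `d` from `x`. -/
theorem stmt_19 (V : Finset (EuclideanSpace ℝ (Fin 2))) (hV : V.Nonempty) :
    ∃ (x : EuclideanSpace ℝ (Fin 2)) (d : ℝ),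
      (∀ v ∈ V, dist x v ≤ d) ∧ (∃ v ∈ V, dist x v = d) ∧
      (∀ y : EuclideanSpace ℝ (Fin 2), ∃ v ∈ V, d ≤ dist y v) ∧
      x ∈ convexHull ℝ {v | v ∈ V ∧ dist x v = d} := by
  obtain ⟨x, hx⟩ := V.exists_forall_sup'_dist_le hV
  have hmin : ∀ y, ∃ v ∈ V, V.sup' hV (dist x ·) ≤ dist y v := fun y => by
    obtain ⟨v, hv, hvy⟩ := V.exists_mem_eq_sup' hV (dist y ·)
    exact ⟨v, hv, hvy ▸ hx y⟩
  have hle : ∀ v ∈ V, dist x v ≤ V.sup' hV (dist x ·) := fun v hv => V.le_sup' (dist x ·) hv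
  obtain ⟨w, hw, hxw⟩ := V.exists_mem_eq_sup' hV (dist x ·)
  exact ⟨x, _, hle, ⟨w, hw, hxw.symm⟩, hmin, mem_convexHull_farthest_of_forall_exists_le hle hmin⟩
end
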